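/- Let S be a G×G positive definite real matrix. Then the function f(Φ) = log det Φ − Tr(ΦS), defined on the set of G×G positive definite real matrices Φ, attains its unique maximum at Φ = S⁻¹: for every positive definite Φ one has f(Φ) ≤ f(S⁻¹) = −log det S − G, with equality if and only if Φ = S⁻¹. -/

import Mathlib

/-!
Write `S = Bᴴ B` with `B` invertible. Then `log det Φ - Tr(Φ S)` equals
`log det A - Tr A - log det S` for the positive definite matrix `A = B Φ Bᴴ`, and in terms of the
eigenvalues `λᵢ > 0` of `A` one has `log det A - Tr A = ∑ᵢ (log λᵢ - λᵢ) ≤ -G` by `log x ≤ x - 1`,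
with equality iff every `λᵢ = 1`, i.e. `A = 1`, i.e. `Φ = S⁻¹`.
-/

open Matrix

lemma Real.log_sub_self_le {x : ℝ} (hx : 0 < x) : Real.log x - x ≤ -1 := by
  linarith [Real.log_le_sub_one_of_pos hx]

lemma Real.log_sub_self_eq_neg_one_iff {x : ℝ} (hx : 0 < x) : Real.log x - x = -1 ↔ x = 1 := by
  refine ⟨fun h => by_contra fun hx1 => ?_, fun h => by simp [h]⟩
  linarith [Real.log_lt_sub_one_of_pos hx hx1]

namespace Matrix

open scoped ComplexOrder

variable {n : Type*} [Fintype n]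

lemma trace_mul_star_mul_self_eq {R : Type*} [CommRing R] [StarRing R] (Φ B : Matrix n n R) :
    (Φ * (star B * B)).trace = (B * Φ * star B).trace := by
  rw [← mul_assoc, trace_mul_comm, ← mul_assoc]

variable [DecidableEq n]

section Conjugation

variable {R : Type*} [CommRing R] [StarRing R] {Φ B : Matrix n n R}

lemma det_mul_mul_star_eq : (B * Φ * star B).det = Φ.det * (star B * B).det := by
  simp only [det_mul]
  ring

lemma mul_mul_star_eq_one_iff (hB : IsUnit B) : B * Φ * star B = 1 ↔ Φ = (star B * B)⁻¹ := by
  rw [mul_assoc, mul_eq_one_comm, mul_assoc]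
  refine ⟨fun h => (inv_eq_left_inv h).symm, fun h => h ▸ nonsing_inv_mul _ ?_⟩
  exact (isUnit_iff_isUnit_det _).mp (hB.star.mul hB)

end Conjugation

lemma log_det_sub_trace_mul_star_mul_self {Φ B : Matrix n n ℝ} (hΦ : Φ.det ≠ 0) (hB : IsUnit B) :
    Real.log Φ.det - (Φ * (star B * B)).trace =
      Real.log (B * Φ * star B).det - (B * Φ * star B).trace - Real.log (star B * B).det := by
  have hS : (star B * B).det ≠ 0 := ((hB.star.mul hB).map detMonoidHom).ne_zero
  rw [trace_mul_star_mul_self_eq, det_mul_mul_star_eq, Real.log_mul hΦ hS]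
  ring

lemma IsHermitian.eq_one_of_eigenvalues_eq_one {𝕜 : Type*} [RCLike 𝕜] {A : Matrix n n 𝕜}
    (hA : A.IsHermitian) (h : ∀ i, hA.eigenvalues i = 1) : A = 1 := by
  rw [hA.spectral_theorem, show RCLike.ofReal ∘ hA.eigenvalues = fun _ => (1 : 𝕜) by ext; simp [h],
    diagonal_one, map_one]

open scoped MatrixOrder in
lemma PosDef.exists_isUnit_eq_star_mul_self {𝕜 : Type*} [RCLike 𝕜] {S : Matrix n n 𝕜}
    (hS : S.PosDef) : ∃ B : Matrix n n 𝕜, IsUnit B ∧ S = star B * B := by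
  obtain ⟨B, rfl⟩ := CStarAlgebra.nonneg_iff_eq_star_mul_self.mp hS.posSemidef.nonneg
  exact ⟨B, isUnit_of_mul_isUnit_right hS.isUnit, rfl⟩

namespace PosDef

variable {A : Matrix n n ℝ}

lemma log_det_sub_trace_eq_sum (hA : A.PosDef) :
    Real.log A.det - A.trace = ∑ i, (Real.log (hA.1.eigenvalues i) - hA.1.eigenvalues i) := by
  rw [hA.1.det_eq_prod_eigenvalues, hA.1.trace_eq_sum_eigenvalues]
  simp only [RCLike.ofReal_real_eq_id, id_eq]
  rw [Real.log_prod fun i _ => (hA.eigenvalues_pos i).ne', Finset.sum_sub_distrib]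

lemma log_det_sub_trace_le (hA : A.PosDef) : Real.log A.det - A.trace ≤ -Fintype.card n :=
  calc Real.log A.det - A.trace
      = ∑ i, (Real.log (hA.1.eigenvalues i) - hA.1.eigenvalues i) := hA.log_det_sub_trace_eq_sum
    _ ≤ ∑ _i : n, (-1 : ℝ) :=
      Finset.sum_le_sum fun i _ => Real.log_sub_self_le (hA.eigenvalues_pos i)
    _ = -Fintype.card n := by simp

lemma log_det_sub_trace_eq_neg_card_iff (hA : A.PosDef) :
    Real.log A.det - A.trace = -Fintype.card n ↔ A = 1 := by
  refine ⟨fun h => hA.1.eq_one_of_eigenvalues_eq_one fun i => ?_, fun h => by simp [h]⟩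
  have hle : ∀ i ∈ Finset.univ, Real.log (hA.1.eigenvalues i) - hA.1.eigenvalues i ≤ -1 :=
    fun i _ => Real.log_sub_self_le (hA.eigenvalues_pos i)
  rw [hA.log_det_sub_trace_eq_sum, show (-Fintype.card n : ℝ) = ∑ _i : n, (-1 : ℝ) by simp,
    Finset.sum_eq_sum_iff_of_le hle] at h
  exact (Real.log_sub_self_eq_neg_one_iff (hA.eigenvalues_pos i)).mp (h i (Finset.mem_univ i))

end PosDef

end Matrix

theorem log_det_trace_maximizer {G : ℕ} (S : Matrix (Fin G) (Fin G) ℝ) (hS : S.PosDef) :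
    (∀ Φ : Matrix (Fin G) (Fin G) ℝ, Φ.PosDef →
        Real.log Φ.det - (Φ * S).trace ≤
          Real.log (S⁻¹ : Matrix (Fin G) (Fin G) ℝ).det - (S⁻¹ * S).trace) ∧
    Real.log (S⁻¹ : Matrix (Fin G) (Fin G) ℝ).det - (S⁻¹ * S).trace =
      -Real.log S.det - G ∧
    (∀ Φ : Matrix (Fin G) (Fin G) ℝ, Φ.PosDef →
        (Real.log Φ.det - (Φ * S).trace = -Real.log S.det - G ↔ Φ = S⁻¹)) := by
  obtain ⟨B, hB, rfl⟩ := hS.exists_isUnit_eq_star_mul_self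
  have hvalue : Real.log (star B * B)⁻¹.det - ((star B * B)⁻¹ * (star B * B)).trace =
      -Real.log (star B * B).det - G := by
    rw [nonsing_inv_mul _ ((isUnit_iff_isUnit_det _).mp hS.isUnit), det_nonsing_inv,
      Ring.inverse_eq_inv, Real.log_inv, trace_one, Fintype.card_fin]
  have hconj {Φ : Matrix (Fin G) (Fin G) ℝ} (hΦ : Φ.PosDef) : (B * Φ * star B).PosDef :=
    (IsUnit.posDef_star_right_conjugate_iff hB).mpr hΦ
  refine ⟨fun Φ hΦ => ?_, hvalue, fun Φ hΦ => ?_⟩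
  · have hle := (hconj hΦ).log_det_sub_trace_le
    rw [Fintype.card_fin] at hle
    rw [hvalue, log_det_sub_trace_mul_star_mul_self hΦ.det_pos.ne' hB]
    linarith
  · rw [log_det_sub_trace_mul_star_mul_self hΦ.det_pos.ne' hB, ← mul_mul_star_eq_one_iff hB,
      ← (hconj hΦ).log_det_sub_trace_eq_neg_card_iff, Fintype.card_fin]
    constructor <;> intro h <;> linarith
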